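/- Let L > 0, ε > 0 and C₀ > 0. Let μ be a finite positive Borel measure on ℝ² supported on the vertical segment { (0, t) : −ε ≤ t ≤ L + ε } such that μ(B(z̄, r)) ≤ C₀ r for all z̄ ∈ ℝ² and r > 0 (linear growth), and such that ∫ P(z̄ − w̄) dμ(w̄) ≤ 2 for every z̄ ∈ ℝ². Then μ = 0. (Consequently, vertical segments have zero 1/2-fractional caloric capacity, while they have positive analytic capacity; so analytic capacity is not comparable to γ^{1/2}_Θ.) -/

import Mathlib

open MeasureTheory
open scoped ENNReal

/-- The planar (N = 1) 1/2-fractional heat kernel: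
`P(x,t) = t/(t² + x²)` for `t > 0`, else `0`. -/
noncomputable def P1 (x t : ℝ) : ℝ := if 0 < t then t / (t ^ 2 + x ^ 2) else 0

/-!
On the vertical axis the kernel is `P(0, t) = 1/t` for `t > 0`, which is not integrable at `0`.
Hence, for every point `w` of the segment, `s ↦ P((0, s) - w)` has infinite integral over a
bounded interval `I` containing the segment. By Tonelli, `∫_I (P * μ)(0, s) ds = ∞ · μ(ℝ²)`,
while the bound `P * μ ≤ 2` makes the left side at most `2 |I| < ∞`; so `μ(ℝ²) = 0`.
-/

open Set

lemma measurable_P1 : Measurable fun p : ℝ × ℝ => P1 p.1 p.2 := by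
  unfold P1
  exact Measurable.ite (measurableSet_lt measurable_const measurable_snd)
    (measurable_snd.div ((measurable_snd.pow_const 2).add (measurable_fst.pow_const 2)))
    measurable_const

lemma ofReal_P1_zero (t : ℝ) : ENNReal.ofReal (P1 0 t) = ENNReal.ofReal t⁻¹ := by
  unfold P1
  split_ifs with ht
  · rw [zero_pow two_ne_zero, add_zero, sq, div_self_mul_self']
  · rw [ENNReal.ofReal_zero, eq_comm, ENNReal.ofReal_eq_zero]
    exact inv_nonpos.2 (not_lt.1 ht)

lemma setLIntegral_ofReal_inv_sub_Ioc_eq_top {b c : ℝ} (hbc : b < c) :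
    ∫⁻ s in Ioc b c, ENNReal.ofReal (s - b)⁻¹ = ∞ := by
  by_contra h_ne_top
  have hnonneg : 0 ≤ᵐ[volume.restrict (Ioc b c)] fun s => (s - b)⁻¹ :=
    (ae_restrict_iff' measurableSet_Ioc).2 <| .of_forall fun s hs =>
      inv_nonneg.2 (sub_nonneg.2 hs.1.le)
  have hint : IntegrableOn (fun s => (s - b)⁻¹) (Ioc b c) :=
    ⟨(measurable_id.sub_const b).inv.aestronglyMeasurable,
      (hasFiniteIntegral_iff_ofReal hnonneg).2 (lt_top_iff_ne_top.2 h_ne_top)⟩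
  have := (intervalIntegrable_iff_integrableOn_Ioc_of_le hbc.le).2 hint
  simp [hbc.ne, left_mem_uIcc] at this

lemma Measure.eq_zero_of_ae_lintegral_eq_top {α β : Type*} [MeasurableSpace α]
    [MeasurableSpace β] {μ : Measure α} {ν : Measure β} [SFinite μ] [SFinite ν]
    {f : α → β → ℝ≥0∞} (hf : AEMeasurable (Function.uncurry f) (μ.prod ν))
    (h_top : ∀ᵐ x ∂μ, ∫⁻ y, f x y ∂ν = ∞) (h_fin : ∫⁻ y, ∫⁻ x, f x y ∂μ ∂ν ≠ ∞) :
    μ = 0 := by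
  rw [← lintegral_lintegral_swap hf, lintegral_congr_ae h_top, lintegral_const] at h_fin
  by_contra hμ
  exact h_fin (ENNReal.top_mul (Measure.measure_univ_ne_zero.2 hμ))

theorem stmt16_general (L ε : ℝ)
    (μ : Measure (ℝ × ℝ)) (hfin : IsFiniteMeasure μ)
    (hsupp : μ {w : ℝ × ℝ | w.1 = 0 ∧ w.2 ∈ Set.Icc (-ε) (L + ε)}ᶜ = 0)
    (hpot : ∀ z : ℝ × ℝ,
      (∫⁻ w : ℝ × ℝ, ENNReal.ofReal (P1 (z.1 - w.1) (z.2 - w.2)) ∂μ) ≤ 2) :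
    μ = 0 := by
  set I := Ioc (-ε) (L + ε + 1)
  refine Measure.eq_zero_of_ae_lintegral_eq_top (ν := volume.restrict I)
    (f := fun w s => ENNReal.ofReal (P1 (0 - w.1) (s - w.2))) ?_ ?_ ?_
  · exact (ENNReal.measurable_ofReal.comp (measurable_P1.comp
      (f := fun p : (ℝ × ℝ) × ℝ => (0 - p.1.1, p.2 - p.1.2)) (by fun_prop))).aemeasurable
  · filter_upwards [mem_ae_iff.2 hsupp] with w ⟨hw1, hw2⟩
    simp only [hw1, sub_zero, ofReal_P1_zero]
    refine top_unique ?_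
    calc ∞ = ∫⁻ s in Ioc w.2 (w.2 + 1), ENNReal.ofReal (s - w.2)⁻¹ :=
          (setLIntegral_ofReal_inv_sub_Ioc_eq_top (lt_add_one _)).symm
      _ ≤ _ := lintegral_mono_set (Ioc_subset_Ioc hw2.1 (by linarith [hw2.2]))
  · refine ne_top_of_le_ne_top ?_ (lintegral_mono fun s => hpot (0, s))
    simp [I, Real.volume_Ioc, ENNReal.mul_eq_top]

/-- Let `L, ε, C₀ > 0` and let `μ` be a finite positive Borel measure on
`ℝ²` supported on the vertical segment `{0} × [−ε, L+ε]`, with linear growth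
`μ(B(z̄,r)) ≤ C₀ r` (Euclidean balls) and potential `P*μ ≤ 2` everywhere. Then `μ = 0`. -/
theorem stmt16 (L ε C₀ : ℝ) (hL : 0 < L) (hε : 0 < ε) (hC : 0 < C₀)
    (μ : Measure (ℝ × ℝ)) (hfin : IsFiniteMeasure μ)
    (hsupp : μ {w : ℝ × ℝ | w.1 = 0 ∧ w.2 ∈ Set.Icc (-ε) (L + ε)}ᶜ = 0)
    (hgrowth : ∀ (z : ℝ × ℝ) (r : ℝ), 0 < r →
      μ {w : ℝ × ℝ | Real.sqrt ((z.1 - w.1) ^ 2 + (z.2 - w.2) ^ 2) < r} ≤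
        ENNReal.ofReal (C₀ * r))
    (hpot : ∀ z : ℝ × ℝ,
      (∫⁻ w : ℝ × ℝ, ENNReal.ofReal (P1 (z.1 - w.1) (z.2 - w.2)) ∂μ) ≤ 2) :
    μ = 0 :=
  stmt16_general L ε μ hfin hsupp hpot
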